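/- Let v ∈ ℂ^n be a vector with all entries in ℤ[1/2,i], let 0 ≤ j < ℓ < n, and suppose lde(v_j) = lde(v_ℓ) = k > 0. Then there exists an exponent q ∈ {0,1} such that the vector v' = (K†)_{[j,ℓ]} · (i^q)_{[ℓ]} · v satisfies lde(v'_j) < k and lde(v'_ℓ) < k, and v'_m = v_m for all indices m ∉ {j, ℓ}. -/

import Mathlib

open Matrix

noncomputable section

/-- The ring ℤ[i] of Gaussian integers, viewed as a subring of ℂ. -/
def Zi : Subring ℂ := Subring.closure {Complex.I}

/-- The ring ℤ[1/2, i]: the smallest subring of ℂ containing 1/2 and i. -/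
def Dhi : Subring ℂ := Subring.closure {(1/2 : ℂ), Complex.I}

/-- The one-level matrix `z_{[j]}`: the n×n identity matrix with the (j,j) entry
replaced by z. -/
def oneLevel (n : ℕ) (z : ℂ) (j : Fin n) : Matrix (Fin n) (Fin n) ℂ :=
  fun a b => if a = j ∧ b = j then z else if a = b then 1 else 0

/-- The two-level matrix `U_{[j,k]}`: the n×n identity matrix with the four entries
in rows and columns j, k replaced by the corresponding entries of the 2×2 matrix U. -/
def twoLevel (n : ℕ) (U : Matrix (Fin 2) (Fin 2) ℂ) (j k : Fin n) :
    Matrix (Fin n) (Fin n) ℂ :=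
  fun a b =>
    if a = j then (if b = j then U 0 0 else if b = k then U 0 1 else 0)
    else if a = k then (if b = j then U 1 0 else if b = k then U 1 1 else 0)
    else if a = b then 1 else 0

/-- The 2×2 matrix X. -/
def Xmat : Matrix (Fin 2) (Fin 2) ℂ := !![0, 1; 1, 0]

/-- The 2×2 matrix K = (1/(1+i))·[[1,1],[1,−1]]. -/
def Kmat : Matrix (Fin 2) (Fin 2) ℂ := (1 / (1 + Complex.I)) • !![1, 1; 1, -1]

/-- The conjugate transpose K† of K. -/
def Kdag : Matrix (Fin 2) (Fin 2) ℂ := Kmatᴴ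

/-- The least denominator exponent of t: the least k with γ^k·t ∈ ℤ[i],
where γ = 1 + i. -/
def lde (t : ℂ) : ℕ := sInf {k : ℕ | (1 + Complex.I) ^ k * t ∈ Zi}

/-!
Put `a = γ^k v_j` and `b = γ^k v_ℓ`. Minimality of `k` says that these Gaussian integers are not
divisible by `γ = 1 + i`, i.e. `a = x + y i` with `x + y` odd, and likewise for `b`. Choosing
`q ∈ {0, 1}` so that the real parts of `a` and `i^q b` have the same parity forces the imaginary
parts to agree mod 2 as well, so `a ± i^q b ∈ 2ℤ[i]`. As `K† = ((1 + i)/2)·[[1, 1], [1, -1]]`, this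
says exactly that `γ^(k-1) v'_j = (a + i^q b)/2` and `γ^(k-1) v'_ℓ = (a - i^q b)/2` lie in `ℤ[i]`.
-/

open Complex

lemma I_mem_Zi : I ∈ Zi := Subring.subset_closure rfl

lemma mem_Zi_iff {t : ℂ} : t ∈ Zi ↔ ∃ x y : ℤ, t = x + y * I := by
  constructor
  · intro h
    induction h using Subring.closure_induction with
    | mem s hs => exact ⟨0, 1, by simp [Set.mem_singleton_iff.mp hs]⟩
    | zero => exact ⟨0, 0, by simp⟩
    | one => exact ⟨1, 0, by simp⟩
    | add _ _ _ _ ihx ihy =>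
        obtain ⟨a, b, rfl⟩ := ihx
        obtain ⟨c, d, rfl⟩ := ihy
        exact ⟨a + c, b + d, by push_cast; ring⟩
    | neg _ _ ihx =>
        obtain ⟨a, b, rfl⟩ := ihx
        exact ⟨-a, -b, by push_cast; ring⟩
    | mul _ _ _ _ ihx ihy =>
        obtain ⟨a, b, rfl⟩ := ihx
        obtain ⟨c, d, rfl⟩ := ihy
        exact ⟨a * c - b * d, a * d + b * c, by push_cast; linear_combination (b * d : ℂ) * I_mul_I⟩
  · rintro ⟨x, y, rfl⟩
    exact add_mem (intCast_mem Zi x) (mul_mem (intCast_mem Zi y) I_mem_Zi)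

lemma one_add_I_ne_zero : (1 + I : ℂ) ≠ 0 := fun h => by simpa using congrArg im h

lemma div_two_mem_Zi {x y : ℤ} (hx : Even x) (hy : Even y) : (x + y * I) / 2 ∈ Zi := by
  obtain ⟨r, rfl⟩ := hx
  obtain ⟨s, rfl⟩ := hy
  exact mem_Zi_iff.mpr ⟨r, s, by push_cast; ring⟩

lemma odd_add_of_div_one_add_I_notMem {x y : ℤ} (h : (x + y * I) / (1 + I) ∉ Zi) :
    Odd (x + y) := by
  rw [← Int.not_even_iff_odd]
  rintro ⟨p, hp⟩
  refine h (mem_Zi_iff.mpr ⟨p, p - x, ?_⟩)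
  have hy : (y : ℂ) = p + p - x := by exact_mod_cast (by omega : y = p + p - x)
  rw [div_eq_iff one_add_I_ne_zero]
  push_cast
  linear_combination I * hy - (p - x : ℂ) * I_mul_I

lemma exists_add_I_pow_mul_div_two_mem_Zi {a b : ℂ} (ha : a ∈ Zi) (hb : b ∈ Zi)
    (ha' : a / (1 + I) ∉ Zi) (hb' : b / (1 + I) ∉ Zi) :
    ∃ q ≤ 1, (a + I ^ q * b) / 2 ∈ Zi := by
  obtain ⟨x, y, rfl⟩ := mem_Zi_iff.mp ha
  obtain ⟨u, w, rfl⟩ := mem_Zi_iff.mp hb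
  have hxy := Int.odd_iff.mp (odd_add_of_div_one_add_I_notMem ha')
  have huw := Int.odd_iff.mp (odd_add_of_div_one_add_I_notMem hb')
  rcases Int.even_or_odd (x + u) with hxu | hxu
  · refine ⟨0, zero_le_one, ?_⟩
    have hyw : Even (y + w) := by rw [Int.even_iff] at hxu ⊢; omega
    convert div_two_mem_Zi hxu hyw using 2
    push_cast; ring
  · refine ⟨1, le_rfl, ?_⟩
    rw [Int.odd_iff] at hxu
    have hxw : Even (x - w) := by rw [Int.even_iff]; omega
    have hyu : Even (y + u) := by rw [Int.even_iff]; omega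
    convert div_two_mem_Zi hxw hyu using 2
    push_cast
    linear_combination (w : ℂ) * I_mul_I

lemma lde_lt {t : ℂ} {k : ℕ} (hk : 0 < k) (h : (1 + I) ^ (k - 1) * t ∈ Zi) : lde t < k :=
  (Nat.sInf_le h).trans_lt (Nat.sub_lt hk one_pos)

lemma pow_mul_mem_Zi_of_lde_eq {t : ℂ} {k : ℕ} (hk : 0 < k) (h : lde t = k) :
    (1 + I) ^ k * t ∈ Zi := by
  rw [← h] at hk ⊢
  refine Nat.sInf_mem (s := {k | (1 + I) ^ k * t ∈ Zi}) (Set.nonempty_iff_ne_empty.mpr fun he => ?_)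
  rw [lde, he, Nat.sInf_empty] at hk
  exact hk.false

lemma pow_mul_div_one_add_I_notMem_Zi_of_lde_eq {t : ℂ} {k : ℕ} (hk : 0 < k) (h : lde t = k) :
    (1 + I) ^ k * t / (1 + I) ∉ Zi := by
  subst h
  have hpred : (1 + I) ^ (lde t - 1) * t ∉ Zi := Nat.notMem_of_lt_sInf (Nat.sub_lt hk one_pos)
  rwa [← Nat.sub_add_cancel hk, pow_succ, mul_right_comm, mul_div_cancel_right₀ _ one_add_I_ne_zero]

lemma oneLevel_eq_diagonal (n : ℕ) (z : ℂ) (ℓ : Fin n) :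
    oneLevel n z ℓ = diagonal (Function.update 1 ℓ z) := by
  ext a b
  by_cases hab : a = b
  · subst hab
    by_cases ha : a = ℓ <;> simp [oneLevel, ha]
  · simp only [oneLevel, hab, if_false, diagonal_apply_ne _ hab, ite_eq_right_iff, and_imp]
    rintro rfl rfl
    exact absurd rfl hab

lemma twoLevel_mulVec {n : ℕ} (U : Matrix (Fin 2) (Fin 2) ℂ) {j ℓ : Fin n} (hjl : j ≠ ℓ)
    (v : Fin n → ℂ) (m : Fin n) :
    (twoLevel n U j ℓ *ᵥ v) m =
      if m = j then U 0 0 * v j + U 0 1 * v ℓ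
      else if m = ℓ then U 1 0 * v j + U 1 1 * v ℓ
      else v m := by
  have hrow : ∀ b, twoLevel n U j ℓ m b =
      (if b = j then (if m = j then U 0 0 else if m = ℓ then U 1 0 else 0) else 0)
      + (if b = ℓ then (if m = j then U 0 1 else if m = ℓ then U 1 1 else 0) else 0)
      + (if m = b then (if m = j then 0 else if m = ℓ then 0 else 1) else 0) := by
    intro b
    simp only [twoLevel]
    by_cases h1 : m = j <;> by_cases h2 : m = ℓ <;> by_cases h3 : b = j <;> by_cases h4 : b = ℓ <;>
      by_cases h5 : m = b <;> simp_all
  simp only [mulVec, dotProduct, hrow, add_mul, Finset.sum_add_distrib, ite_mul, zero_mul,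
    Finset.sum_ite_eq', Finset.sum_ite_eq, Finset.mem_univ, if_true]
  by_cases h1 : m = j <;> by_cases h2 : m = ℓ <;> simp_all

lemma Kdag_eq : Kdag = !![(1 + I) / 2, (1 + I) / 2; (1 + I) / 2, -((1 + I) / 2)] := by
  have h : (1 + -I)⁻¹ = (1 + I) / 2 :=
    inv_eq_of_mul_eq_one_right (by linear_combination (-(1 : ℂ) / 2) * I_mul_I)
  ext a b
  fin_cases a <;> fin_cases b <;> simp [Kdag, Kmat, conjTranspose_apply, h]

lemma twoLevel_Kdag_mul_oneLevel_mulVec {n : ℕ} {j ℓ : Fin n} (hjl : j ≠ ℓ) (z : ℂ)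
    (v : Fin n → ℂ) (m : Fin n) :
    ((twoLevel n Kdag j ℓ * oneLevel n z ℓ) *ᵥ v) m =
      if m = j then (1 + I) / 2 * (v j + z * v ℓ)
      else if m = ℓ then (1 + I) / 2 * (v j - z * v ℓ)
      else v m := by
  rw [← mulVec_mulVec, twoLevel_mulVec _ hjl, oneLevel_eq_diagonal]
  simp only [mulVec_diagonal, Function.update_self, Function.update_of_ne hjl, Pi.one_apply,
    one_mul, Kdag_eq, of_apply, cons_val', cons_val_zero, cons_val_one, cons_val_fin_one]
  split_ifs with hmj hml
  · ring
  · ring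
  · rw [Function.update_of_ne hml, Pi.one_apply, one_mul]

theorem stmt_6_general (n : ℕ) (v : Fin n → ℂ)
    (j ℓ : Fin n) (hjl : j < ℓ) (k : ℕ) (hk : 0 < k)
    (hj : lde (v j) = k) (hl : lde (v ℓ) = k) :
    ∃ q : ℕ, q ≤ 1 ∧
      ∀ v' : Fin n → ℂ,
        v' = (twoLevel n Kdag j ℓ * oneLevel n (Complex.I ^ q) ℓ).mulVec v →
        lde (v' j) < k ∧ lde (v' ℓ) < k ∧ ∀ m : Fin n, m ≠ j → m ≠ ℓ → v' m = v m := by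
  have ha := pow_mul_mem_Zi_of_lde_eq hk hj
  have hb := pow_mul_mem_Zi_of_lde_eq hk hl
  obtain ⟨q, hq, hmem⟩ := exists_add_I_pow_mul_div_two_mem_Zi ha hb
    (pow_mul_div_one_add_I_notMem_Zi_of_lde_eq hk hj)
    (pow_mul_div_one_add_I_notMem_Zi_of_lde_eq hk hl)
  have hpow : (1 + I) ^ k = (1 + I) ^ (k - 1) * (1 + I) := by rw [← pow_succ, Nat.sub_add_cancel hk]
  refine ⟨q, hq, ?_⟩
  rintro v' rfl
  simp only [twoLevel_Kdag_mul_oneLevel_mulVec hjl.ne, ↓reduceIte, hjl.ne']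
  refine ⟨lde_lt hk ?_, lde_lt hk ?_, fun m hmj hml => by simp [hmj, hml]⟩
  · convert hmem using 1
    rw [hpow]; ring
  · -- `(a - i^q b)/2 = (a + i^q b)/2 - i^q b`
    convert sub_mem hmem (mul_mem (pow_mem I_mem_Zi q) hb) using 1
    rw [hpow]; ring

/-- Row operation: if lde(v_j) = lde(v_ℓ) = k > 0 then there is
q ∈ {0,1} such that v' = (K†)_{[j,ℓ]}·(i^q)_{[ℓ]}·v has lde(v'_j), lde(v'_ℓ) < k
and agrees with v elsewhere. -/
theorem stmt_6 (n : ℕ) (v : Fin n → ℂ) (hv : ∀ m, v m ∈ Dhi)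
    (j ℓ : Fin n) (hjl : j < ℓ) (k : ℕ) (hk : 0 < k)
    (hj : lde (v j) = k) (hl : lde (v ℓ) = k) :
    ∃ q : ℕ, q ≤ 1 ∧
      ∀ v' : Fin n → ℂ,
        v' = (twoLevel n Kdag j ℓ * oneLevel n (Complex.I ^ q) ℓ).mulVec v →
        lde (v' j) < k ∧ lde (v' ℓ) < k ∧ ∀ m : Fin n, m ≠ j → m ≠ ℓ → v' m = v m :=
  stmt_6_general n v j ℓ hjl k hk hj hl

end
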